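/- Let n ≥ 1, let A0 ∈ ℝ^{n×n}, B0, E0 ∈ ℝ^{n×1}, C0 ∈ ℝ^{1×n}. Assume (A0, C0) is observable, assume the augmented pair (A, C) with A = [[A0, E0], [0_{1×n}, 1]] and C = [C0, 0] is observable, and assume there exists z ∈ ℂ for which the matrix [[A0 − z·I_n, E0], [C0, 0]] has rank strictly less than n+1 (i.e., (A0, E0, C0) has an invariant zero). Let L ∈ ℝ^{n+1} be any gain with charpoly(A − L·C) = X^{n+1}. Then it is NOT the case that for all f : ℕ → ℝ, u : ℕ → ℝ, x : ℕ → ℝ^n with x(k+1) = A0 x(k) + B0 u(k) + E0 f(k), and all X̂ : ℕ → ℝ^{n+1} with X̂(k+1) = A X̂(k) + B u(k) + L (C0 x(k) − C X̂(k)), the last component f̂(k) of X̂(k) equals f(k−n−1) for every k ≥ n+2. In other words, there exist such f, u, x, X̂ and some k ≥ n+2 with f̂(k) ≠ f(k−n−1). -/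

import Mathlib

open Matrix

/-- The observability matrix of the pair `(M, c)`: rows `c, c*M, …, c*M^(m-1)`. -/
noncomputable def obsMat {m : ℕ} (M : Matrix (Fin m) (Fin m) ℝ)
    (c : Matrix (Fin 1) (Fin m) ℝ) : Matrix (Fin m) (Fin m) ℝ :=
  Matrix.of fun i j => (c * M ^ (i : ℕ)) 0 j

/-- The Rosenbrock system matrix `[[A0 - z I, E0], [C0, 0]]` with entries coerced to `ℂ`. -/
noncomputable def rosenbrock (n : ℕ) (A0 : Matrix (Fin n) (Fin n) ℝ)
    (E0 : Matrix (Fin n) (Fin 1) ℝ) (C0 : Matrix (Fin 1) (Fin n) ℝ) (z : ℂ) :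
    Matrix (Fin n ⊕ Fin 1) (Fin n ⊕ Fin 1) ℂ :=
  Matrix.fromBlocks (A0.map Complex.ofReal - z • 1) (E0.map Complex.ofReal)
    (C0.map Complex.ofReal) 0

/-- The augmented system matrix `A = [[A0, E0], [0, 1]]` of size `(n+1) × (n+1)`. -/
noncomputable def augA (n : ℕ) (A0 : Matrix (Fin n) (Fin n) ℝ)
    (E0 : Matrix (Fin n) (Fin 1) ℝ) : Matrix (Fin (n + 1)) (Fin (n + 1)) ℝ :=
  Matrix.of fun i j =>
    if hi : (i : ℕ) < n then
      if hj : (j : ℕ) < n then A0 ⟨i, hi⟩ ⟨j, hj⟩ else E0 ⟨i, hi⟩ 0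
    else
      if (j : ℕ) < n then 0 else 1

/-- The augmented output matrix `C = [C0, 0]` of size `1 × (n+1)`. -/
noncomputable def augC (n : ℕ) (C0 : Matrix (Fin 1) (Fin n) ℝ) :
    Matrix (Fin 1) (Fin (n + 1)) ℝ :=
  Matrix.of fun i j => if hj : (j : ℕ) < n then C0 i ⟨j, hj⟩ else 0

/-- The augmented input matrix `B = (B0; 0)` of size `(n+1) × 1`. -/
noncomputable def augB (n : ℕ) (B0 : Matrix (Fin n) (Fin 1) ℝ) :
    Matrix (Fin (n + 1)) (Fin 1) ℝ :=
  Matrix.of fun i j => if hi : (i : ℕ) < n then B0 ⟨i, hi⟩ j else 0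


/-!
An invariant zero `z` of `(A0, E0, C0)` yields a complex direction `V` with `A0 V + E0 = z V` and
`C0 V = 0`: by observability of `(A0, C0)`, the disturbance component of a kernel vector of the
Rosenbrock matrix is nonzero and can be normalised to `1`.

If `z ≠ 0`, the real part of `z^(k-1) V`, driven by the disturbance `Re z^(k-1)`, is a trajectory
with zero output, so the observer started at `0` stays at `0` although the disturbance is `1` at
time `1`.

If `z = 0`, the real vector `v = Re V` satisfies `(A - L C) (v; 1) = e` and `C (v; 1) = 0`, where
`e` is the last unit vector, so nilpotency of `A - L C` forces `(A - L C)^n e = 0`. A unit step of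
the disturbance at time `2` produces the estimation error `(A - L C)^(k-2) e`, which vanishes at
`k = n + 2`, whereas exact reconstruction needs its last entry to be `f (n + 2) - f 1 = 1`.
-/

def augState {n : ℕ} (x : Matrix (Fin n) (Fin 1) ℝ) (s : ℝ) : Matrix (Fin (n + 1)) (Fin 1) ℝ :=
  Matrix.of fun i _ => Fin.lastCases s (fun j => x j 0) i

section Augmented

variable {n : ℕ}

@[simp] lemma augState_last (x : Matrix (Fin n) (Fin 1) ℝ) (s : ℝ) (j : Fin 1) :
    augState x s (Fin.last n) j = s := by
  simp [augState]

lemma augState_add (x y : Matrix (Fin n) (Fin 1) ℝ) (s t : ℝ) :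
    augState (x + y) (s + t) = augState x s + augState y t := by
  ext i j
  cases i using Fin.lastCases <;> simp [augState]

lemma augState_smul (r : ℝ) (x : Matrix (Fin n) (Fin 1) ℝ) (s : ℝ) :
    augState (r • x) (r * s) = r • augState x s := by
  ext i j
  cases i using Fin.lastCases <;> simp [augState]

lemma augA_mul_augState (A0 : Matrix (Fin n) (Fin n) ℝ) (E0 x : Matrix (Fin n) (Fin 1) ℝ)
    (s : ℝ) : augA n A0 E0 * augState x s = augState (A0 * x + s • E0) s := by
  ext i j
  rw [Subsingleton.elim j 0]
  cases i using Fin.lastCases <;>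
    simp [augA, augState, Matrix.mul_apply, Fin.sum_univ_castSucc, mul_comm]

lemma augC_mul_augState (C0 : Matrix (Fin 1) (Fin n) ℝ) (x : Matrix (Fin n) (Fin 1) ℝ)
    (s : ℝ) : augC n C0 * augState x s = C0 * x := by
  ext i j
  rw [Subsingleton.elim j 0]
  simp [augC, augState, Matrix.mul_apply, Fin.sum_univ_castSucc]

lemma augB_eq_augState (B0 : Matrix (Fin n) (Fin 1) ℝ) : augB n B0 = augState B0 0 := by
  ext i j
  rw [Subsingleton.elim j 0]
  cases i using Fin.lastCases <;> simp [augB, augState]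

end Augmented

section Observer

variable {n : ℕ} {A0 : Matrix (Fin n) (Fin n) ℝ} {B0 E0 : Matrix (Fin n) (Fin 1) ℝ}
  {C0 : Matrix (Fin 1) (Fin n) ℝ} {L : Matrix (Fin (n + 1)) (Fin 1) ℝ}
  {f u : ℕ → ℝ} {x : ℕ → Matrix (Fin n) (Fin 1) ℝ}

lemma augState_succ (hx : ∀ k, x (k + 1) = A0 * x k + u k • B0 + f k • E0) (k : ℕ) :
    augState (x (k + 1)) (f (k + 1)) = augA n A0 E0 * augState (x k) (f k)
      + u k • augB n B0 + (f (k + 1) - f k) • augState 0 1 := by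
  rw [augA_mul_augState, augB_eq_augState, ← augState_smul, ← augState_smul, ← augState_add,
    ← augState_add, hx]
  congr 1
  · simp only [smul_zero, add_zero]
    abel
  · ring

lemma observer_of_error (hx : ∀ k, x (k + 1) = A0 * x k + u k • B0 + f k • E0)
    {e : ℕ → Matrix (Fin (n + 1)) (Fin 1) ℝ}
    (he : ∀ k, e (k + 1) = (augA n A0 E0 - L * augC n C0) * e k
      + (f (k + 1) - f k) • augState 0 1) (k : ℕ) :
    augState (x (k + 1)) (f (k + 1)) - e (k + 1) =
      augA n A0 E0 * (augState (x k) (f k) - e k) + u k • augB n B0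
        + ((C0 * x k) 0 0 - (augC n C0 * (augState (x k) (f k) - e k)) 0 0) • L := by
  have hL : (augC n C0 * e k) 0 0 • L = L * (augC n C0 * e k) := by
    ext i j
    simp [Matrix.mul_apply, mul_comm, Subsingleton.elim j 0]
  rw [augState_succ hx, he, Matrix.mul_sub (augC n C0), Matrix.mul_sub (augA n A0 E0),
    augC_mul_augState, Matrix.sub_apply, sub_sub_cancel, hL, Matrix.sub_mul, Matrix.mul_assoc]
  abel

end Observer

lemma Matrix.pow_mulVec_eq_smul {ι K : Type*} [Fintype ι] [DecidableEq ι] [CommRing K]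
    {M : Matrix ι ι K} {v : ι → K} {z : K} (hv : M *ᵥ v = z • v) (k : ℕ) :
    (M ^ k) *ᵥ v = z ^ k • v := by
  induction k with
  | zero => simp
  | succ k ih =>
    rw [pow_succ', ← Matrix.mulVec_mulVec, ih, Matrix.mulVec_smul, hv, smul_smul, pow_succ]

lemma eq_zero_of_isUnit_det_obsMat {K : Type*} [Field K] (φ : ℝ →+* K) {m : ℕ}
    {M : Matrix (Fin m) (Fin m) ℝ} {c : Matrix (Fin 1) (Fin m) ℝ} (hobs : IsUnit (obsMat M c).det)
    {v : Fin m → K} {z : K} (hMv : M.map φ *ᵥ v = z • v) (hcv : c.map φ *ᵥ v = 0) : v = 0 := by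
  have hdet : ((obsMat M c).map φ).det ≠ 0 := by
    rw [← RingHom.mapMatrix_apply, ← RingHom.map_det]
    exact (hobs.map φ).ne_zero
  refine Matrix.eq_zero_of_mulVec_eq_zero hdet (funext fun i => ?_)
  have hrow : ((obsMat M c).map φ *ᵥ v) i = ((c.map φ * M.map φ ^ (i : ℕ)) *ᵥ v) 0 := by
    simp only [Matrix.mulVec, dotProduct, obsMat, Matrix.map_apply, Matrix.of_apply,
      ← Matrix.map_pow, ← Matrix.map_mul]
  rw [hrow, ← Matrix.mulVec_mulVec, Matrix.pow_mulVec_eq_smul hMv, Matrix.mulVec_smul, hcv]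
  simp

lemma exists_zero_direction_of_rank_lt {n : ℕ} {A0 : Matrix (Fin n) (Fin n) ℝ}
    {E0 : Matrix (Fin n) (Fin 1) ℝ} {C0 : Matrix (Fin 1) (Fin n) ℝ}
    (hobs : IsUnit (obsMat A0 C0).det) {z : ℂ} (hz : (rosenbrock n A0 E0 C0 z).rank < n + 1) :
    ∃ V : Matrix (Fin n) (Fin 1) ℂ, A0.map Complex.ofReal * V + E0.map Complex.ofReal = z • V ∧
      C0.map Complex.ofReal * V = 0 := by
  have hdet : (rosenbrock n A0 E0 C0 z).det = 0 := by
    by_contra hdet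
    have := (rosenbrock n A0 E0 C0 z).rank_of_isUnit
      ((Matrix.isUnit_iff_isUnit_det _).mpr (isUnit_iff_ne_zero.mpr hdet))
    simp [this] at hz
  obtain ⟨W, hW0, hW⟩ := Matrix.exists_mulVec_eq_zero_iff.mpr hdet
  rw [rosenbrock, Matrix.fromBlocks_mulVec, Matrix.zero_mulVec, add_zero] at hW
  set v := W ∘ Sum.inl
  set w := W ∘ Sum.inr
  have htop : A0.map Complex.ofReal *ᵥ v + E0.map Complex.ofReal *ᵥ w = z • v := by
    have : (A0.map Complex.ofReal - z • 1) *ᵥ v + E0.map Complex.ofReal *ᵥ w = 0 :=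
      funext fun i => congrFun hW (.inl i)
    rw [Matrix.sub_mulVec, Matrix.smul_mulVec, Matrix.one_mulVec] at this
    rw [← sub_eq_zero, ← this]
    abel
  have hbot : C0.map Complex.ofReal *ᵥ v = 0 := funext fun i => congrFun hW (.inr i)
  have hw : w 0 ≠ 0 := by
    intro hw
    have hw : w = 0 := funext fun i => by rwa [Subsingleton.elim i 0]
    rw [hw, Matrix.mulVec_zero, add_zero] at htop
    have hv : v = 0 := eq_zero_of_isUnit_det_obsMat Complex.ofRealHom hobs htop hbot
    refine hW0 (funext fun s => ?_)
    rcases s with i | i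
    exacts [congrFun hv i, congrFun hw i]
  have hscaled : A0.map Complex.ofReal *ᵥ ((w 0)⁻¹ • v)
      + E0.map Complex.ofReal *ᵥ ((w 0)⁻¹ • w) = z • (w 0)⁻¹ • v := by
    rw [Matrix.mulVec_smul, Matrix.mulVec_smul, ← smul_add, htop, smul_comm]
  have hw1 : (w 0)⁻¹ • w = fun _ => 1 := funext fun i => by simp [Subsingleton.elim i 0, hw]
  refine ⟨Matrix.replicateCol (Fin 1) ((w 0)⁻¹ • v), ?_, ?_⟩
  · ext i j
    rw [Subsingleton.elim j 0]
    simpa [Matrix.mulVec, dotProduct, Matrix.mul_apply, hw1, Finset.mul_sum, mul_left_comm]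
      using congrFun hscaled i
  · ext i j
    simpa [Matrix.mulVec, dotProduct, Matrix.mul_apply, Subsingleton.elim i 0, Finset.mul_sum,
      mul_left_comm] using congrArg ((w 0)⁻¹ * ·) (congrFun hbot 0)

lemma Matrix.map_re_map_ofReal_mul {l m p : Type*} [Fintype m] (A : Matrix l m ℝ)
    (X : Matrix m p ℂ) : (A.map Complex.ofReal * X).map Complex.re = A * X.map Complex.re := by
  ext i j
  simp [Matrix.mul_apply, Complex.re_sum]

lemma Matrix.map_re_smul_map_ofReal {m p : Type*} (c : ℂ) (E : Matrix m p ℝ) :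
    (c • E.map Complex.ofReal).map Complex.re = c.re • E := by
  ext i j
  simp

section ZeroDynamics

variable {n : ℕ} {A0 : Matrix (Fin n) (Fin n) ℝ} {E0 : Matrix (Fin n) (Fin 1) ℝ}
  {C0 : Matrix (Fin 1) (Fin n) ℝ} {V : Matrix (Fin n) (Fin 1) ℂ} {z : ℂ}

lemma zeroDynamics_succ (hV : A0.map Complex.ofReal * V + E0.map Complex.ofReal = z • V)
    (c : ℂ) (k : ℕ) :
    ((c * z ^ (k + 1)) • V).map Complex.re
      = A0 * ((c * z ^ k) • V).map Complex.re + (c * z ^ k).re • E0 := by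
  rw [pow_succ, ← mul_assoc, mul_smul, ← hV, smul_add, Matrix.map_add _ Complex.add_re,
    ← Matrix.mul_smul, Matrix.map_re_map_ofReal_mul, Matrix.map_re_smul_map_ofReal]

lemma zeroDynamics_output_eq_zero (hCV : C0.map Complex.ofReal * V = 0) (c : ℂ) :
    C0 * (c • V).map Complex.re = 0 := by
  rw [← Matrix.map_re_map_ofReal_mul, Matrix.mul_smul, hCV, smul_zero]
  exact Matrix.map_zero _ rfl

end ZeroDynamics

lemma pow_mul_augState_eq_zero {n : ℕ} {A0 : Matrix (Fin n) (Fin n) ℝ}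
    {E0 v : Matrix (Fin n) (Fin 1) ℝ} {C0 : Matrix (Fin 1) (Fin n) ℝ}
    {L : Matrix (Fin (n + 1)) (Fin 1) ℝ} (hv : A0 * v + E0 = 0) (hCv : C0 * v = 0)
    (hL : (augA n A0 E0 - L * augC n C0).charpoly = Polynomial.X ^ (n + 1)) :
    (augA n A0 E0 - L * augC n C0) ^ n * augState (0 : Matrix (Fin n) (Fin 1) ℝ) 1 = 0 := by
  set M := augA n A0 E0 - L * augC n C0
  have hMv : M * augState v 1 = augState 0 1 := by
    rw [Matrix.sub_mul, Matrix.mul_assoc, augC_mul_augState, hCv, Matrix.mul_zero, sub_zero,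
      augA_mul_augState, one_smul, hv]
  have hnil : M ^ (n + 1) = 0 := by simpa [hL] using Matrix.aeval_self_charpoly M
  rw [← hMv, ← Matrix.mul_assoc, ← pow_succ, hnil, Matrix.zero_mul]

def ReconstructsDisturbance (n : ℕ) (A0 : Matrix (Fin n) (Fin n) ℝ)
    (B0 E0 : Matrix (Fin n) (Fin 1) ℝ) (C0 : Matrix (Fin 1) (Fin n) ℝ)
    (L : Matrix (Fin (n + 1)) (Fin 1) ℝ) : Prop :=
  ∀ (f u : ℕ → ℝ) (x : ℕ → Matrix (Fin n) (Fin 1) ℝ)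
    (Xh : ℕ → Matrix (Fin (n + 1)) (Fin 1) ℝ),
    (∀ k, x (k + 1) = A0 * x k + u k • B0 + f k • E0) →
    (∀ k, Xh (k + 1) = augA n A0 E0 * Xh k + u k • augB n B0
      + ((C0 * x k) 0 0 - (augC n C0 * Xh k) 0 0) • L) →
    ∀ k, n + 2 ≤ k → Xh k (Fin.last n) 0 = f (k - (n + 1))

namespace ReconstructsDisturbance

variable {n : ℕ} {A0 : Matrix (Fin n) (Fin n) ℝ} {B0 E0 : Matrix (Fin n) (Fin 1) ℝ}
  {C0 : Matrix (Fin 1) (Fin n) ℝ} {L : Matrix (Fin (n + 1)) (Fin 1) ℝ}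

lemma eq_zero_of_output_eq_zero (h : ReconstructsDisturbance n A0 B0 E0 C0 L) {f : ℕ → ℝ}
    {x : ℕ → Matrix (Fin n) (Fin 1) ℝ} (hx : ∀ k, x (k + 1) = A0 * x k + f k • E0)
    (hy : ∀ k, C0 * x k = 0) {j : ℕ} (hj : 1 ≤ j) : f j = 0 := by
  have := h f 0 x 0 (by simpa using hx) (fun k => by simp [hy k]) (j + n + 1) (by omega)
  rw [show j + n + 1 - (n + 1) = j by omega] at this
  exact this.symm

lemma error_last_eq (h : ReconstructsDisturbance n A0 B0 E0 C0 L) {f u : ℕ → ℝ}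
    {x : ℕ → Matrix (Fin n) (Fin 1) ℝ} (hx : ∀ k, x (k + 1) = A0 * x k + u k • B0 + f k • E0)
    {e : ℕ → Matrix (Fin (n + 1)) (Fin 1) ℝ}
    (he : ∀ k, e (k + 1) = (augA n A0 E0 - L * augC n C0) * e k
      + (f (k + 1) - f k) • augState 0 1)
    {k : ℕ} (hk : n + 2 ≤ k) : e k (Fin.last n) 0 = f k - f (k - (n + 1)) := by
  have := h f u x (fun k => augState (x k) (f k) - e k) hx (observer_of_error hx he) k hk
  rw [Matrix.sub_apply, augState_last] at this
  linarith

lemma pow_mul_augState_ne_zero (h : ReconstructsDisturbance n A0 B0 E0 C0 L) :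
    (augA n A0 E0 - L * augC n C0) ^ n * augState (0 : Matrix (Fin n) (Fin 1) ℝ) 1 ≠ 0 := by
  intro hM
  set M := augA n A0 E0 - L * augC n C0
  let f : ℕ → ℝ := fun k => if 2 ≤ k then 1 else 0
  let x : ℕ → Matrix (Fin n) (Fin 1) ℝ := fun k =>
    Nat.rec 0 (fun m xm => A0 * xm + (0 : ℝ) • B0 + f m • E0) k
  let e : ℕ → Matrix (Fin (n + 1)) (Fin 1) ℝ := fun k =>
    if 2 ≤ k then M ^ (k - 2) * augState (0 : Matrix (Fin n) (Fin 1) ℝ) 1 else 0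
  have he : ∀ k, e (k + 1) = M * e k + (f (k + 1) - f k) • augState 0 1 := by
    rintro (_ | _ | k) <;> simp [e, f, pow_succ', Matrix.mul_assoc]
  have := h.error_last_eq (u := 0) (x := x) (fun _ => rfl) he (k := n + 2) le_rfl
  simp [e, f, hM] at this

end ReconstructsDisturbance

theorem stmt5_general (n : ℕ)
    (A0 : Matrix (Fin n) (Fin n) ℝ) (B0 E0 : Matrix (Fin n) (Fin 1) ℝ)
    (C0 : Matrix (Fin 1) (Fin n) ℝ)
    (hobs : IsUnit (obsMat A0 C0).det)
    (hzero : ∃ z : ℂ, (rosenbrock n A0 E0 C0 z).rank < n + 1)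
    (L : Matrix (Fin (n + 1)) (Fin 1) ℝ)
    (hL : (augA n A0 E0 - L * augC n C0).charpoly = Polynomial.X ^ (n + 1)) :
    ¬ (∀ (f u : ℕ → ℝ) (x : ℕ → Matrix (Fin n) (Fin 1) ℝ)
        (Xh : ℕ → Matrix (Fin (n + 1)) (Fin 1) ℝ),
        (∀ k, x (k + 1) = A0 * x k + u k • B0 + f k • E0) →
        (∀ k, Xh (k + 1) = augA n A0 E0 * Xh k + u k • augB n B0
          + ((C0 * x k) 0 0 - (augC n C0 * Xh k) 0 0) • L) →
        ∀ k, n + 2 ≤ k → Xh k (Fin.last n) 0 = f (k - (n + 1))) := by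
  intro h
  change ReconstructsDisturbance n A0 B0 E0 C0 L at h
  obtain ⟨z, hz⟩ := hzero
  obtain ⟨V, hV, hCV⟩ := exists_zero_direction_of_rank_lt hobs hz
  by_cases hz0 : z = 0
  · subst hz0
    have hv : A0 * V.map Complex.re + E0 = 0 := by simpa using (zeroDynamics_succ hV 1 0).symm
    have hCv : C0 * V.map Complex.re = 0 := by simpa using zeroDynamics_output_eq_zero hCV 1
    exact h.pow_mul_augState_ne_zero (pow_mul_augState_eq_zero hv hCv hL)
  · have hf1 := h.eq_zero_of_output_eq_zero (x := fun k => ((z⁻¹ * z ^ k) • V).map Complex.re)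
      (zeroDynamics_succ hV _) (fun _ => zeroDynamics_output_eq_zero hCV _) le_rfl
    simp [hz0] at hf1

theorem stmt5 (n : ℕ) (hn : 1 ≤ n)
    (A0 : Matrix (Fin n) (Fin n) ℝ) (B0 E0 : Matrix (Fin n) (Fin 1) ℝ)
    (C0 : Matrix (Fin 1) (Fin n) ℝ)
    (hobs : IsUnit (obsMat A0 C0).det)
    (hobsAug : IsUnit (obsMat (augA n A0 E0) (augC n C0)).det)
    (hzero : ∃ z : ℂ, (rosenbrock n A0 E0 C0 z).rank < n + 1)
    (L : Matrix (Fin (n + 1)) (Fin 1) ℝ)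
    (hL : (augA n A0 E0 - L * augC n C0).charpoly = Polynomial.X ^ (n + 1)) :
    ¬ (∀ (f u : ℕ → ℝ) (x : ℕ → Matrix (Fin n) (Fin 1) ℝ)
        (Xh : ℕ → Matrix (Fin (n + 1)) (Fin 1) ℝ),
        (∀ k, x (k + 1) = A0 * x k + u k • B0 + f k • E0) →
        (∀ k, Xh (k + 1) = augA n A0 E0 * Xh k + u k • augB n B0
          + ((C0 * x k) 0 0 - (augC n C0 * Xh k) 0 0) • L) →
        ∀ k, n + 2 ≤ k → Xh k (Fin.last n) 0 = f (k - (n + 1))) :=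
  stmt5_general n A0 B0 E0 C0 hobs hzero L hL
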